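/- Let p, q ∈ AP be distinct and let f be the signal with q ∈ f(t) for all t ≥ 0 and p ∈ f(t) if and only if t = 1/2^n for some n ∈ ℕ. Let φ := (N q) ∧ ¬(p U_(0,1) q) ∧ ¬((¬p) U_(0,1) q), where N ψ := ψ R_(0,∞) ψ. Then: (a) f is finitely variable from the left with respect to every atomic proposition (under the new semantics); (b) f ⊨ φ under the new semantics and f ⊨old φ under the old semantics; and (c) nnf(φ) = (q R_(0,∞) q) ∧ ((¬p) R_(0,1) (¬q)) ∧ (p R_(0,1) (¬q)) is unsatisfiable: no signal g satisfies nnf(φ) under the new semantics, and no signal g satisfies it under the old semantics. -/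

import Mathlib

open scoped NNReal ENNReal
open Set

namespace MITL

/-- A signal assigns to each nonnegative real time the set of atomic
propositions true at that time. -/
abbrev Signal (AP : Type*) := ℝ≥0 → Set AP

/-- The shifted signal `f^r`, defined by `f^r(t) = f(r+t)`. -/
def shift {AP : Type*} (f : Signal AP) (r : ℝ≥0) : Signal AP := fun t => f (r + t)

/-- MTL formulas over atomic propositions `AP`; the timing constraints are
(intended to be) intervals of nonnegative reals. -/
inductive MTL (AP : Type*) where
  | top : MTL AP
  | bot : MTL AP
  | atom : AP → MTL AP
  | neg : MTL AP → MTL AP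
  | disj : MTL AP → MTL AP → MTL AP
  | conj : MTL AP → MTL AP → MTL AP
  | until_ : MTL AP → MTL AP → Set ℝ≥0 → MTL AP
  | release : MTL AP → MTL AP → Set ℝ≥0 → MTL AP

variable {AP : Type*}

/-- The NEW satisfaction relation: `NSat f φ` means `f ⊨ φ`. -/
def NSat : Signal AP → MTL AP → Prop
  | _, .top => True
  | _, .bot => False
  | f, .atom p => p ∈ f 0
  | f, .neg φ => ¬ NSat f φ
  | f, .disj φ1 φ2 => NSat f φ1 ∨ NSat f φ2
  | f, .conj φ1 φ2 => NSat f φ1 ∧ NSat f φ2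
  | f, .until_ φ1 φ2 I =>
      ∃ t1 ∈ I, NSat (shift f t1) φ2 ∧ ∀ t2 ∈ Set.Ioo 0 t1, NSat (shift f t2) φ1
  | f, .release φ1 φ2 I =>
      (∀ t1 ∈ I, NSat (shift f t1) φ2) ∨
      (∃ t1 : ℝ≥0, 0 < t1 ∧ NSat (shift f t1) φ1 ∧
        ∀ t2 ∈ Set.Ioc 0 t1 ∩ I, NSat (shift f t2) φ2) ∨
      (∃ t1 ∈ I ∪ {sInf I}, ∃ t2 ∈ I, t1 < t2 ∧
        ∀ t3 ∈ I, (t3 ≤ t1 → NSat (shift f t3) φ2) ∧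
          (t1 < t3 → t3 ≤ t2 → NSat (shift f t3) φ1))

/-- Finite variability from the right of a signal `f` with respect to a formula
`φ`, relative to a satisfaction relation `Sat`. -/
def FinVarRight (Sat : Signal AP → MTL AP → Prop) (f : Signal AP) (φ : MTL AP) : Prop :=
  ∀ r : ℝ≥0,
    (∀ ε : ℝ≥0, 0 < ε → ∃ t ∈ Set.Ioo r (r + ε), Sat (shift f t) φ) →
    ∃ ε : ℝ≥0, 0 < ε ∧ ∀ t ∈ Set.Ioo r (r + ε), Sat (shift f t) φ

/-- Finite variability from the left of a signal `f` with respect to a formula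
`φ`, relative to a satisfaction relation `Sat`. -/
def FinVarLeft (Sat : Signal AP → MTL AP → Prop) (f : Signal AP) (φ : MTL AP) : Prop :=
  ∀ r : ℝ≥0, 0 < r →
    (∀ ε ∈ Set.Ioo 0 r, ∃ t ∈ Set.Ioo (r - ε) r, Sat (shift f t) φ) →
    ∃ ε ∈ Set.Ioo 0 r, ∀ t ∈ Set.Ioo (r - ε) r, Sat (shift f t) φ

/-- The OLD satisfaction relation: `OSat f φ` means `f ⊨old φ`. -/
def OSat : Signal AP → MTL AP → Prop
  | _, .top => True
  | _, .bot => False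
  | f, .atom p => p ∈ f 0
  | f, .neg φ => ¬ OSat f φ
  | f, .disj φ1 φ2 => OSat f φ1 ∨ OSat f φ2
  | f, .conj φ1 φ2 => OSat f φ1 ∧ OSat f φ2
  | f, .until_ φ1 φ2 I =>
      ∃ t1 ∈ I, OSat (shift f t1) φ2 ∧ ∀ t2 ∈ Set.Ioo 0 t1, OSat (shift f t2) φ1
  | f, .release φ1 φ2 I =>
      (∀ t1 ∈ I, OSat (shift f t1) φ2) ∨
      (∃ t1 : ℝ≥0, 0 < t1 ∧ OSat (shift f t1) φ1 ∧
        ∀ t2 ∈ Set.Ioc 0 t1 ∩ I, OSat (shift f t2) φ2)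

mutual
/-- The negated normal form of an MTL formula. -/
def nnf : MTL AP → MTL AP
  | .top => .top
  | .bot => .bot
  | .atom p => .atom p
  | .neg φ => nnfNeg φ
  | .disj φ1 φ2 => .disj (nnf φ1) (nnf φ2)
  | .conj φ1 φ2 => .conj (nnf φ1) (nnf φ2)
  | .until_ φ1 φ2 I => .until_ (nnf φ1) (nnf φ2) I
  | .release φ1 φ2 I => .release (nnf φ1) (nnf φ2) I

/-- `nnfNeg φ` is the negated normal form `nnf (¬ φ)`. -/
def nnfNeg : MTL AP → MTL AP
  | .top => .bot
  | .bot => .top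
  | .atom p => .neg (.atom p)
  | .neg φ => nnf φ
  | .disj φ1 φ2 => .conj (nnfNeg φ1) (nnfNeg φ2)
  | .conj φ1 φ2 => .disj (nnfNeg φ1) (nnfNeg φ2)
  | .until_ φ1 φ2 I => .release (nnfNeg φ1) (nnfNeg φ2) I
  | .release φ1 φ2 I => .until_ (nnfNeg φ1) (nnfNeg φ2) I
end

/-- The defined operator `N φ := φ R_(0,∞) φ`. -/
def Next (φ : MTL AP) : MTL AP := .release φ φ (Set.Ioi 0)

/-!
The times `1 / 2 ^ n` accumulate only at `0`: seen from the left of any `r > 0` they are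
eventually absent, so every atom is finitely variable from the left, while in every right
neighbourhood of `0` the proposition `p` both holds and fails. Hence neither `p` nor `¬p` holds
on an initial interval, and both untils fail, under either semantics.

Conversely, a release `φ₁ R_I φ₂` whose interval `I` is a right neighbourhood of `0` forces `φ₂`
or (only through the new disjunct (iii)) `φ₁` on an initial interval. So `q R q` forces `q`
there; under the old semantics `(¬p) R (¬q)` then forces `¬q` there, and under the new one
`(¬p) R (¬q)` and `p R (¬q)` force `¬p` and `p` on an initial interval at once.
-/

open Filter Topology

theorem inv_two_pow_lt_inv_two_pow {m n : ℕ} : ((2 : ℝ≥0) ^ m)⁻¹ < (2 ^ n)⁻¹ ↔ n < m := by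
  rw [inv_lt_inv₀ (by positivity) (by positivity), pow_lt_pow_iff_right₀ one_lt_two]

theorem exists_inv_two_pow_lt {r : ℝ≥0} (hr : 0 < r) : ∃ n : ℕ, ((2 : ℝ≥0) ^ n)⁻¹ < r := by
  simpa only [inv_pow] using NNReal.exists_pow_lt_of_lt_one hr two_inv_lt_one

theorem frequently_eq_inv_two_pow_nhdsGT :
    ∃ᶠ t in 𝓝[>] (0 : ℝ≥0), ∃ n : ℕ, t = ((2 : ℝ≥0) ^ n)⁻¹ := by
  refine (nhdsGT_basis 0).frequently_iff.2 fun c hc => ?_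
  obtain ⟨n, hn⟩ := exists_inv_two_pow_lt hc
  exact ⟨_, ⟨by positivity, hn⟩, n, rfl⟩

theorem frequently_ne_inv_two_pow_nhdsGT :
    ∃ᶠ t in 𝓝[>] (0 : ℝ≥0), ∀ n : ℕ, t ≠ ((2 : ℝ≥0) ^ n)⁻¹ := by
  refine (nhdsGT_basis 0).frequently_iff.2 fun c hc => ?_
  obtain ⟨n, hn⟩ := exists_inv_two_pow_lt hc
  obtain ⟨t, hlo, hhi⟩ := exists_between (inv_two_pow_lt_inv_two_pow.2 n.lt_succ_self)
  refine ⟨t, ⟨pos_of_gt hlo, hhi.trans hn⟩, ?_⟩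
  rintro m rfl
  have := inv_two_pow_lt_inv_two_pow.1 hlo
  have := inv_two_pow_lt_inv_two_pow.1 hhi
  omega

theorem eventually_ne_inv_two_pow_nhdsLT {r : ℝ≥0} (hr : 0 < r) :
    ∀ᶠ t in 𝓝[<] r, ∀ n : ℕ, t ≠ ((2 : ℝ≥0) ^ n)⁻¹ := by
  classical
  have hex := exists_inv_two_pow_lt hr
  filter_upwards [Ioo_mem_nhdsLT (Nat.find_spec hex)] with t ht
  rintro n rfl
  exact Nat.find_min hex (inv_two_pow_lt_inv_two_pow.1 ht.1) ht.2

section Semantics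

variable {g : Signal AP} {φ φ1 φ2 ψ χ : MTL AP} {I J : Set ℝ≥0}

theorem finVarLeft_of_eventually {Sat : Signal AP → MTL AP → Prop}
    (h : ∀ r : ℝ≥0, 0 < r →
      (∀ᶠ t in 𝓝[<] r, Sat (shift g t) φ) ∨ ∀ᶠ t in 𝓝[<] r, ¬ Sat (shift g t) φ) :
    FinVarLeft Sat g φ := by
  intro r hr hfreq
  have hleft : ∀ {P : ℝ≥0 → Prop}, (∀ᶠ t in 𝓝[<] r, P t) →
      ∃ ε ∈ Ioo 0 r, ∀ t ∈ Ioo (r - ε) r, P t := by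
    intro P hP
    obtain ⟨l, ⟨hl, hlr⟩, hPl⟩ :=
      (mem_nhdsLT_iff_exists_mem_Ico_Ioo_subset (half_lt_self hr)).1 hP
    refine ⟨r - l, ⟨tsub_pos_of_lt hlr, tsub_lt_self hr ((half_pos hr).trans_le hl)⟩, ?_⟩
    rwa [tsub_tsub_cancel_of_le hlr.le]
  rcases h r hr with hsat | hunsat
  · exact hleft hsat
  · obtain ⟨ε, hε, hnot⟩ := hleft hunsat
    obtain ⟨t, ht, hsat⟩ := hfreq ε hε
    exact absurd hsat (hnot t ht)

@[simp]
theorem NSat_neg : NSat g (.neg φ) ↔ ¬ NSat g φ := Iff.rfl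

@[simp]
theorem OSat_neg : OSat g (.neg φ) ↔ ¬ OSat g φ := Iff.rfl

@[simp]
theorem NSat_shift_atom {a : AP} {t : ℝ≥0} : NSat (shift g t) (.atom a) ↔ a ∈ g t := by
  simp [NSat, shift]

@[simp]
theorem OSat_shift_atom {a : AP} {t : ℝ≥0} : OSat (shift g t) (.atom a) ↔ a ∈ g t := by
  simp [OSat, shift]

theorem NSat.eventually_of_until (hI : I ⊆ Ioi 0) (h : NSat g (.until_ φ1 φ2 I)) :
    ∀ᶠ t in 𝓝[>] 0, NSat (shift g t) φ1 := by
  obtain ⟨t1, ht1, -, hφ1⟩ := h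
  exact mem_of_superset (Ioo_mem_nhdsGT (hI ht1)) hφ1

theorem OSat.eventually_of_until (hI : I ⊆ Ioi 0) (h : OSat g (.until_ φ1 φ2 I)) :
    ∀ᶠ t in 𝓝[>] 0, OSat (shift g t) φ1 := by
  obtain ⟨t1, ht1, -, hφ1⟩ := h
  exact mem_of_superset (Ioo_mem_nhdsGT (hI ht1)) hφ1

theorem NSat.eventually_or_of_release (hI : I ∈ 𝓝[>] 0) (h : NSat g (.release φ1 φ2 I)) :
    (∀ᶠ t in 𝓝[>] 0, NSat (shift g t) φ2) ∨ ∀ᶠ t in 𝓝[>] 0, NSat (shift g t) φ1 := by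
  rcases h with hall | ⟨t1, ht1, -, hφ2⟩ | ⟨t1, -, t2, ht2, ht12, hφ⟩
  · exact .inl (mem_of_superset hI hall)
  · exact .inl (mem_of_superset (inter_mem (Ioc_mem_nhdsGT ht1) hI) hφ2)
  · rcases eq_zero_or_pos t1 with rfl | ht1
    · exact .inr (mem_of_superset (inter_mem (Ioc_mem_nhdsGT ht12) hI)
        fun t ht => (hφ t ht.2).2 ht.1.1 ht.1.2)
    · exact .inl (mem_of_superset (inter_mem (Ioc_mem_nhdsGT ht1) hI)
        fun t ht => (hφ t ht.2).1 ht.1.2)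

theorem OSat.eventually_of_release (hI : I ∈ 𝓝[>] 0) (h : OSat g (.release φ1 φ2 I)) :
    ∀ᶠ t in 𝓝[>] 0, OSat (shift g t) φ2 := by
  rcases h with hall | ⟨t1, ht1, -, hφ2⟩
  · exact mem_of_superset hI hall
  · exact mem_of_superset (inter_mem (Ioc_mem_nhdsGT ht1) hI) hφ2

theorem not_NSat_release_conj_release_conj_release (hI : I ∈ 𝓝[>] 0) (hJ : J ∈ 𝓝[>] 0) :
    ¬ NSat g (.conj (.conj (.release ψ ψ I) (.release (.neg χ) (.neg ψ) J))
      (.release χ (.neg ψ) J)) := by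
  rintro ⟨⟨hψψ, hnχ⟩, hχ⟩
  have hψ : ∀ᶠ t in 𝓝[>] 0, NSat (shift g t) ψ := or_self_iff.1 (hψψ.eventually_or_of_release hI)
  have hfirst : ∀ {φ : MTL AP}, NSat g (.release φ (.neg ψ) J) →
      ∀ᶠ t in 𝓝[>] 0, NSat (shift g t) φ :=
    fun h => (h.eventually_or_of_release hJ).resolve_left hψ.frequently
  exact (hfirst hχ).frequently (hfirst hnχ)

theorem not_OSat_release_conj_release (hI : I ∈ 𝓝[>] 0) (hJ : J ∈ 𝓝[>] 0) :
    ¬ OSat g (.conj (.release ψ ψ I) (.release χ (.neg ψ) J)) := fun ⟨hψ, hnψ⟩ =>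
  (hψ.eventually_of_release hI).frequently (hnψ.eventually_of_release hJ)

variable {p q : AP}

theorem NSat_next_conj_not_until_conj_not_until (hI : I ⊆ Ioi 0) (hq : ∀ t, q ∈ g t)
    (hp : ∃ᶠ t in 𝓝[>] 0, p ∈ g t) (hnp : ∃ᶠ t in 𝓝[>] 0, p ∉ g t) :
    NSat g (.conj (.conj (Next (.atom q)) (.neg (.until_ (.atom p) (.atom q) I)))
      (.neg (.until_ (.neg (.atom p)) (.atom q) I))) :=
  ⟨⟨.inl fun t _ => NSat_shift_atom.2 (hq t),
    fun h => hnp (by simpa using h.eventually_of_until hI)⟩,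
    fun h => hp (by simpa using h.eventually_of_until hI)⟩

theorem OSat_next_conj_not_until_conj_not_until (hI : I ⊆ Ioi 0) (hq : ∀ t, q ∈ g t)
    (hp : ∃ᶠ t in 𝓝[>] 0, p ∈ g t) (hnp : ∃ᶠ t in 𝓝[>] 0, p ∉ g t) :
    OSat g (.conj (.conj (Next (.atom q)) (.neg (.until_ (.atom p) (.atom q) I)))
      (.neg (.until_ (.neg (.atom p)) (.atom q) I))) :=
  ⟨⟨.inl fun t _ => OSat_shift_atom.2 (hq t),
    fun h => hnp (by simpa using h.eventually_of_until hI)⟩,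
    fun h => hp (by simpa using h.eventually_of_until hI)⟩

end Semantics

theorem fvar_left_not_enough (p q : AP) (hpq : p ≠ q)
    (f : Signal AP)
    (hf : f = fun t => {a : AP | a = q ∨ (a = p ∧ ∃ n : ℕ, t = ((2 : ℝ≥0) ^ n)⁻¹)})
    (φ : MTL AP)
    (hφ : φ = .conj (.conj (Next (.atom q))
        (.neg (.until_ (.atom p) (.atom q) (Set.Ioo 0 1))))
      (.neg (.until_ (.neg (.atom p)) (.atom q) (Set.Ioo 0 1)))) :
    (∀ a : AP, FinVarLeft NSat f (.atom a)) ∧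
    (NSat f φ ∧ OSat f φ) ∧
    (nnf φ = .conj (.conj (.release (.atom q) (.atom q) (Set.Ioi 0))
        (.release (.neg (.atom p)) (.neg (.atom q)) (Set.Ioo 0 1)))
      (.release (.atom p) (.neg (.atom q)) (Set.Ioo 0 1)) ∧
      (∀ g : Signal AP, ¬ NSat g (nnf φ)) ∧
      (∀ g : Signal AP, ¬ OSat g (nnf φ))) := by
  have hq : ∀ t, q ∈ f t := by simp [hf]
  have hp : ∀ t, p ∈ f t ↔ ∃ n : ℕ, t = ((2 : ℝ≥0) ^ n)⁻¹ := by simp [hf, hpq]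
  have hp_freq : ∃ᶠ t in 𝓝[>] 0, p ∈ f t :=
    frequently_eq_inv_two_pow_nhdsGT.mono fun t ht => (hp t).2 ht
  have hnp_freq : ∃ᶠ t in 𝓝[>] 0, p ∉ f t :=
    frequently_ne_inv_two_pow_nhdsGT.mono fun t ht => not_exists.2 ht ∘ (hp t).1
  have hI : Ioo (0 : ℝ≥0) 1 ∈ 𝓝[>] 0 := Ioo_mem_nhdsGT one_pos
  subst hφ
  refine ⟨fun a => finVarLeft_of_eventually fun r hr => ?_,
    ⟨NSat_next_conj_not_until_conj_not_until Ioo_subset_Ioi_self hq hp_freq hnp_freq,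
      OSat_next_conj_not_until_conj_not_until Ioo_subset_Ioi_self hq hp_freq hnp_freq⟩,
    rfl, fun g => not_NSat_release_conj_release_conj_release self_mem_nhdsWithin hI,
    fun g h => not_OSat_release_conj_release self_mem_nhdsWithin hI h.1⟩
  by_cases haq : a = q
  · exact .inl (.of_forall fun t => by simpa [haq] using hq t)
  · refine .inr ((eventually_ne_inv_two_pow_nhdsLT hr).mono fun t ht hat => ?_)
    obtain ⟨-, n, rfl⟩ : a = p ∧ ∃ n : ℕ, t = ((2 : ℝ≥0) ^ n)⁻¹ := by simpa [hf, haq] using hat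
    exact ht n rfl

end MITL
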